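/- General prior Conditional Limit Theorem for Sources: Let π be a prior pmf on the set R of rational pmfs with finite support S = {q ∈ R : π(q) > 0}, and for each n let a quantization of R be given with induced prior π^A_n on R_n; assume the mesh of the quantizations tends to 0. Let p ∈ P(X) have full support, and let ν_n ∈ R_n with d(ν_n, p) → 0. Let Q ⊆ P(X) be convex and closed with p ∉ Q and Q∩S ≠ ∅, let q̂^π be the unique maximizer of q ↦ L(q‖p) over the finite set Q∩S, with L(q̂^π‖p) > −∞, and assume q̂^π lies in the interior of Q relative to P(X). Then for every ε > 0, lim_{n→∞} π^A_n(B(q̂^π,ε)∩Q | ν_n) / π^A_n(Q | ν_n) = 1. -/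

import Mathlib

open scoped BigOperators Classical
open Filter Topology

noncomputable section

def pmfSet (X : Type*) [Fintype X] : Set (X → ℝ) :=
  {p | (∀ x, 0 ≤ p x) ∧ ∑ x, p x = 1}

def Rn (X : Type*) [Fintype X] (n : ℕ) : Set (X → ℝ) :=
  {q | q ∈ pmfSet X ∧ ∀ x, ∃ k : ℕ, q x = (k : ℝ) / (n : ℝ)}

def ratPMF (X : Type*) [Fintype X] : Set (X → ℝ) :=
  {q | q ∈ pmfSet X ∧ ∀ x, ∃ r : ℚ, q x = (r : ℝ)}

def Ldiv {X : Type*} [Fintype X] (q p : X → ℝ) : EReal :=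
  ∑ x, if p x = 0 then (0 : EReal)
    else if q x = 0 then (⊥ : EReal)
    else (↑(p x * Real.log (q x)) : EReal)

def LSup {X : Type*} [Fintype X] (Q : Set (X → ℝ)) (p : X → ℝ) : EReal :=
  ⨆ q ∈ Q, Ldiv q p

def Idiv {X : Type*} [Fintype X] (p q : X → ℝ) : EReal :=
  ∑ x, if p x = 0 then (0 : EReal)
    else if q x = 0 then (⊤ : EReal)
    else (↑(p x * Real.log (p x / q x)) : EReal)

def typeProb {X : Type*} [Fintype X] (n : ℕ) (ν q : X → ℝ) : ℝ :=
  ∏ x, q x ^ ((n : ℝ) * ν x)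

def post {X : Type*} [Fintype X] (n : ℕ) (ν : X → ℝ) (Q : Set (X → ℝ)) : ℝ :=
  (∑' q : ↥(Q ∩ Rn X n), typeProb n ν ↑q) / (∑' q : ↥(Rn X n), typeProb n ν ↑q)

def postGen {X : Type*} [Fintype X] (w : (X → ℝ) → ℝ) (n : ℕ) (ν : X → ℝ)
    (Q : Set (X → ℝ)) : ℝ :=
  (∑' q : ↥(Q ∩ Rn X n), w ↑q * typeProb n ν ↑q) /
  (∑' q : ↥(Rn X n), w ↑q * typeProb n ν ↑q)

def tv {X : Type*} [Fintype X] (p q : X → ℝ) : ℝ := (1 / 2) * ∑ x, |p x - q x|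

def tvBall {X : Type*} [Fintype X] (q : X → ℝ) (ε : ℝ) : Set (X → ℝ) :=
  {p | p ∈ pmfSet X ∧ tv p q ≤ ε}

def elog (x : ℝ) : EReal := if x ≤ 0 then (⊥ : EReal) else (↑(Real.log x) : EReal)

def linFam {X : Type*} [Fintype X] {k : ℕ} (u : Fin k → X → ℝ) (a : Fin k → ℝ) :
    Set (X → ℝ) :=
  {q | q ∈ pmfSet X ∧ ∀ j, ∑ x, q x * u j x = a j}

def lambdaN {X : Type*} [Fintype X] (w : (X → ℝ) → ℝ) (n : ℕ) (ν : X → ℝ)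
    (C : Set (X → ℝ)) : EReal :=
  ⨆ q ∈ C ∩ {q | q ∈ Rn X n ∧ 0 < w q},
    (Ldiv q ν + (↑((1 : ℝ) / n * Real.log (w q)) : EReal))

def priorN {X : Type*} [Fintype X] (c : ℕ → (X → ℝ) → (X → ℝ)) (pr : (X → ℝ) → ℝ)
    (n : ℕ) (qn : X → ℝ) : ℝ :=
  ∑' q : ↥{q | q ∈ ratPMF X ∧ c n q = qn}, pr ↑q


section Helpers
set_option linter.unusedSectionVars false
variable {X : Type*} [Fintype X]

lemma pmf_le_one {q : X → ℝ} (hq : q ∈ pmfSet X) (x : X) : q x ≤ 1 := by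
  rw [← hq.2]
  exact Finset.single_le_sum (fun y _ => hq.1 y) (Finset.mem_univ x)

lemma Rn_subset_rat (n : ℕ) : Rn X n ⊆ ratPMF X := by
  rintro q ⟨hq, h⟩
  refine ⟨hq, fun x => ?_⟩
  obtain ⟨k, hk⟩ := h x
  exact ⟨(k : ℚ) / (n : ℚ), by rw [hk]; push_cast; ring⟩

lemma typeProb_nonneg {n : ℕ} {ν q : X → ℝ} (hq : ∀ x, 0 ≤ q x) : 0 ≤ typeProb n ν q :=
  Finset.prod_nonneg fun x _ => Real.rpow_nonneg (hq x) _

lemma abs_le_two_tv (p q : X → ℝ) (x : X) : |p x - q x| ≤ 2 * tv p q := by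
  unfold tv
  have : |p x - q x| ≤ ∑ y, |p y - q y| :=
    Finset.single_le_sum (f := fun y => |p y - q y|) (fun y _ => abs_nonneg _) (Finset.mem_univ x)
  linarith

lemma tv_nonneg (p q : X → ℝ) : 0 ≤ tv p q := by
  unfold tv
  positivity

lemma tv_symm (p q : X → ℝ) : tv p q = tv q p := by
  unfold tv
  congr 1
  exact Finset.sum_congr rfl fun x _ => abs_sub_comm _ _

lemma coord_tendsto {f : ℕ → X → ℝ} {g : X → ℝ}
    (h : Tendsto (fun n => tv (f n) g) atTop (nhds 0)) (x : X) :
    Tendsto (fun n => f n x) atTop (nhds (g x)) := by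
  rw [tendsto_iff_norm_sub_tendsto_zero]
  apply squeeze_zero (fun n => norm_nonneg _) (fun n => ?_) (by simpa using h.const_mul 2)
  simpa [Real.norm_eq_abs] using abs_le_two_tv (f n) g x

lemma tsum_subtype_eq_sum {A : Set (X → ℝ)} {f : (X → ℝ) → ℝ} {t : Finset (X → ℝ)}
    (h : ∀ x, x ∈ A → f x ≠ 0 → x ∈ t) :
    (∑' x : ↥A, f ↑x) = ∑ x ∈ t, if x ∈ A then f x else 0 := by
  rw [tsum_subtype]
  rw [tsum_eq_sum (s := t) (fun x hx => ?_)]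
  · exact Finset.sum_congr rfl fun x _ => Set.indicator_apply A f x
  · rw [Set.indicator_apply]
    split_ifs with hxA
    · by_contra hne; exact hx (h x hxA hne)
    · rfl

lemma Ldiv_eq_coe {q p : X → ℝ} (h : ∀ x, p x ≠ 0 → q x ≠ 0) :
    Ldiv q p = ((∑ x, p x * Real.log (q x) : ℝ) : EReal) := by
  unfold Ldiv
  have : ((∑ x, p x * Real.log (q x) : ℝ) : EReal) = ∑ x, ((p x * Real.log (q x) : ℝ) : EReal) := by
    induction (Finset.univ : Finset X) using Finset.induction_on with
    | empty => simp
    | insert _ _ hx ih => rw [Finset.sum_insert hx, Finset.sum_insert hx, EReal.coe_add, ih]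
  rw [this]
  refine Finset.sum_congr rfl fun x _ => ?_
  by_cases hp : p x = 0
  · simp [hp]
  · rw [if_neg hp, if_neg (h x hp)]

lemma Ldiv_eq_bot {q p : X → ℝ} (x0 : X) (hp : p x0 ≠ 0) (hq : q x0 = 0) :
    Ldiv q p = ⊥ := by
  unfold Ldiv
  rw [← Finset.add_sum_erase _ _ (Finset.mem_univ x0), if_neg hp, if_pos hq, EReal.bot_add]

lemma Ldiv_bot_lt_imp {q p : X → ℝ} (h : ⊥ < Ldiv q p) (hp : ∀ x, 0 < p x) :
    ∀ x, q x ≠ 0 := by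
  intro x hx
  rw [Ldiv_eq_bot x (ne_of_gt (hp x)) hx] at h
  exact lt_irrefl _ h

lemma priorN_eq_sum (pr : (X → ℝ) → ℝ) (S : Set (X → ℝ)) (hSfin : S.Finite)
    (c : ℕ → (X → ℝ) → (X → ℝ))
    (hS : S = {q | q ∈ ratPMF X ∧ 0 < pr q}) (hpr0 : ∀ q, 0 ≤ pr q)
    (n : ℕ) (qn : X → ℝ) :
    priorN c pr n qn = ∑ q ∈ hSfin.toFinset.filter (fun q => c n q = qn), pr q := by
  unfold priorN
  rw [tsum_subtype_eq_sum (t := hSfin.toFinset.filter (fun q => c n q = qn))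
    (fun x hx hne => ?_)]
  · refine Finset.sum_congr rfl fun x hx => ?_
    rw [if_pos]
    rw [Finset.mem_filter, Set.Finite.mem_toFinset] at hx
    have hxr : x ∈ ratPMF X := by
      have := hx.1; rw [hS] at this; exact this.1
    exact ⟨hxr, hx.2⟩
  · rw [Finset.mem_filter, Set.Finite.mem_toFinset, hS]
    exact ⟨⟨hx.1, lt_of_le_of_ne (hpr0 x) (Ne.symm hne)⟩, hx.2⟩

lemma key0 (pr : (X → ℝ) → ℝ) (S : Set (X → ℝ)) (hSfin : S.Finite)
    (c : ℕ → (X → ℝ) → (X → ℝ))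
    (hS : S = {q | q ∈ ratPMF X ∧ 0 < pr q}) (hpr0 : ∀ q, 0 ≤ pr q)
    (n : ℕ) (ν : X → ℝ) (A : Set (X → ℝ)) :
    (∑' qn : ↥A, priorN c pr n ↑qn * typeProb n ν ↑qn)
      = ∑ q ∈ hSfin.toFinset, if c n q ∈ A then pr q * typeProb n ν (c n q) else 0 := by
  rw [tsum_subtype_eq_sum (f := fun qn => priorN c pr n qn * typeProb n ν qn)
    (t := hSfin.toFinset.image (c n)) (fun qn hqn hne => ?_)]
  · rw [Finset.sum_image' (fun q => if c n q ∈ A then pr q * typeProb n ν (c n q) else 0)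
      (fun q hq => ?_)]
    rw [priorN_eq_sum pr S hSfin c hS hpr0]
    by_cases hA : c n q ∈ A
    · rw [if_pos hA, Finset.sum_mul]
      refine Finset.sum_congr rfl fun q' hq' => ?_
      rw [Finset.mem_filter] at hq'
      show pr q' * typeProb n ν (c n q) = if c n q' ∈ A then pr q' * typeProb n ν (c n q') else 0
      rw [hq'.2, if_pos hA]
    · rw [if_neg hA]
      refine (Finset.sum_eq_zero fun q' hq' => ?_).symm
      rw [Finset.mem_filter] at hq'
      show (if c n q' ∈ A then pr q' * typeProb n ν (c n q') else 0) = 0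
      rw [hq'.2, if_neg hA]
  · have hpn : priorN c pr n qn ≠ 0 := fun h0 => hne (mul_eq_zero_of_left h0 _)
    rw [priorN_eq_sum pr S hSfin c hS hpr0] at hpn
    obtain ⟨q, hq, -⟩ := Finset.exists_ne_zero_of_sum_ne_zero hpn
    rw [Finset.mem_filter] at hq
    exact Finset.mem_image.2 ⟨q, hq.1, hq.2⟩

lemma typeProb_eq_exp {n : ℕ} {ν q : X → ℝ} (hq : ∀ x, 0 < q x) :
    typeProb n ν q = Real.exp ((n : ℝ) * ∑ x, ν x * Real.log (q x)) := by
  unfold typeProb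
  rw [Finset.mul_sum, Real.exp_sum]
  refine Finset.prod_congr rfl fun x _ => ?_
  rw [Real.rpow_def_of_pos (hq x)]
  ring_nf

lemma typeProb_le_single {n : ℕ} {ν q : X → ℝ} (hq : q ∈ pmfSet X) (hν : ∀ x, 0 ≤ ν x)
    (x0 : X) : typeProb n ν q ≤ q x0 ^ ((n : ℝ) * ν x0) := by
  unfold typeProb
  rw [← Finset.prod_erase_mul _ _ (Finset.mem_univ x0)]
  have h1 : ∏ x ∈ Finset.univ.erase x0, q x ^ ((n : ℝ) * ν x) ≤ 1 :=
    Finset.prod_le_one (fun x _ => Real.rpow_nonneg (hq.1 x) _)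
      (fun x _ => Real.rpow_le_one (hq.1 x) (pmf_le_one hq x)
        (mul_nonneg (Nat.cast_nonneg n) (hν x)))
  have h2 : (0:ℝ) ≤ q x0 ^ ((n : ℝ) * ν x0) := Real.rpow_nonneg (hq.1 x0) _
  calc (∏ x ∈ Finset.univ.erase x0, q x ^ ((n : ℝ) * ν x)) * q x0 ^ ((n : ℝ) * ν x0)
      ≤ 1 * q x0 ^ ((n : ℝ) * ν x0) := mul_le_mul_of_nonneg_right h1 h2
    _ = q x0 ^ ((n : ℝ) * ν x0) := one_mul _

lemma exp_ratio_tendsto {α β : ℝ} (h : α < β) :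
    Tendsto (fun n : ℕ => Real.exp ((n : ℝ) * α) / Real.exp ((n : ℝ) * β)) atTop (nhds 0) := by
  have : ∀ n : ℕ, Real.exp ((n : ℝ) * α) / Real.exp ((n : ℝ) * β)
      = Real.exp (α - β) ^ n := by
    intro n
    rw [← Real.exp_sub, ← Real.exp_nat_mul]
    ring_nf
  simp only [this]
  exact tendsto_pow_atTop_nhds_zero_of_lt_one (le_of_lt (Real.exp_pos _))
    (Real.exp_lt_one_iff.2 (by linarith))

end Helpers

/-- General prior Conditional Limit Theorem for Sources. -/
theorem general_prior_CoLT_for_sources {X : Type*} [Fintype X] [Nonempty X]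
    (pr : (X → ℝ) → ℝ) (S : Set (X → ℝ))
    (hS : S = {q | q ∈ ratPMF X ∧ 0 < pr q})
    (hSfin : S.Finite)
    (hpr0 : ∀ q, 0 ≤ pr q) (hprsupp : ∀ q, q ∉ ratPMF X → pr q = 0)
    (hpr1 : (∑' q : ↥S, pr ↑q) = 1)
    (c : ℕ → (X → ℝ) → (X → ℝ))
    (hc1 : ∀ n, 1 ≤ n → ∀ q ∈ ratPMF X, c n q ∈ Rn X n)
    (hc2 : ∀ n, 1 ≤ n → ∀ q ∈ Rn X n, c n q = q)
    (hmesh : ∀ δ : ℝ, 0 < δ → ∃ N : ℕ, ∀ n ≥ N, ∀ q ∈ ratPMF X, ∀ q' ∈ ratPMF X,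
      c n q = c n q' → tv q q' < δ)
    (p : X → ℝ) (hp : p ∈ pmfSet X) (hpfull : ∀ x, 0 < p x)
    (ν : ℕ → X → ℝ) (hν : ∀ n, 1 ≤ n → ν n ∈ Rn X n)
    (hconv : Filter.Tendsto (fun n => tv (ν n) p) Filter.atTop (nhds 0))
    (Q : Set (X → ℝ)) (hQsub : Q ⊆ pmfSet X)
    (hQconv : Convex ℝ Q) (hQclosed : IsClosed {r : ↥(pmfSet X) | ↑r ∈ Q})
    (hrare : p ∉ Q) (hQS : (Q ∩ S).Nonempty)
    (qhat : X → ℝ) (hqhatQ : qhat ∈ Q ∩ S)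
    (hmax : ∀ q ∈ Q ∩ S, Ldiv q p ≤ Ldiv qhat p)
    (huniq : ∀ q ∈ Q ∩ S, Ldiv q p = Ldiv qhat p → q = qhat)
    (hfin : ⊥ < Ldiv qhat p)
    (hint : ∃ U : Set (X → ℝ), IsOpen U ∧ qhat ∈ U ∧ U ∩ pmfSet X ⊆ Q) :
    ∀ ε : ℝ, 0 < ε →
      Filter.Tendsto
        (fun n : ℕ =>
          postGen (priorN c pr n) n (ν n) (tvBall qhat ε ∩ Q) /
            postGen (priorN c pr n) n (ν n) Q)
        Filter.atTop (nhds 1) := by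
  intro ε hε
  classical
  -- Basic facts
  have hqhatS : qhat ∈ S := hqhatQ.2
  have hqhatQm : qhat ∈ Q := hqhatQ.1
  have hqhat_rat : qhat ∈ ratPMF X := by have := hqhatS; rw [hS] at this; exact this.1
  have hqhat_pr : 0 < pr qhat := by have := hqhatS; rw [hS] at this; exact this.2
  have hqhat_pos : ∀ x, 0 < qhat x := fun x =>
    lt_of_le_of_ne (hqhat_rat.1.1 x) (Ne.symm (Ldiv_bot_lt_imp hfin hpfull x))
  have hSrat : ∀ q ∈ S, q ∈ ratPMF X := fun q hq => by rw [hS] at hq; exact hq.1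
  have hν_coord : ∀ x, Tendsto (fun n => ν n x) atTop (nhds (p x)) := coord_tendsto hconv
  have hn1ev : ∀ᶠ n : ℕ in atTop, 1 ≤ n := eventually_ge_atTop 1
  have htvq : ∀ q ∈ ratPMF X, Tendsto (fun n => tv q (c n q)) atTop (nhds 0) := by
    intro q hq
    rw [Metric.tendsto_atTop]
    intro δ hδ
    obtain ⟨N, hN⟩ := hmesh δ hδ
    refine ⟨max N 1, fun n hn => ?_⟩
    have hn1 : 1 ≤ n := le_trans (le_max_right _ _) hn
    have hnN : N ≤ n := le_trans (le_max_left _ _) hn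
    have hcq : c n q ∈ ratPMF X := Rn_subset_rat n (hc1 n hn1 q hq)
    have h2 : tv q (c n q) < δ :=
      hN n hnN q hq (c n q) hcq (hc2 n hn1 _ (hc1 n hn1 q hq)).symm
    have h3 := tv_nonneg q (c n q)
    rw [Real.dist_eq, abs_of_nonneg (by linarith)]
    linarith
  have hc_coord : ∀ q ∈ ratPMF X, ∀ x, Tendsto (fun n => c n q x) atTop (nhds (q x)) :=
    fun q hq x => coord_tendsto ((htvq q hq).congr (fun n => tv_symm q (c n q))) x
  have hc_tendsto : ∀ q ∈ ratPMF X, Tendsto (fun n => c n q) atTop (nhds q) :=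
    fun q hq => tendsto_pi_nhds.2 (hc_coord q hq)
  set s : Finset (X → ℝ) := hSfin.toFinset with hs_def
  set T : ℕ → (X → ℝ) → ℝ := fun n q => typeProb n (ν n) (c n q) with hT_def
  set F : ℕ → Set (X → ℝ) → ℝ := fun n C => ∑ q ∈ s, if c n q ∈ C then pr q * T n q else 0
    with hF_def
  have hpost : ∀ n C, postGen (priorN c pr n) n (ν n) C = F n (C ∩ Rn X n) / F n (Rn X n) := by
    intro n C
    unfold postGen
    rw [key0 pr S hSfin c hS hpr0 n (ν n) (C ∩ Rn X n), key0 pr S hSfin c hS hpr0 n (ν n) (Rn X n)]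
  have hmemRn : ∀ n, 1 ≤ n → ∀ q ∈ s, c n q ∈ Rn X n := fun n hn q hq =>
    hc1 n hn q (hSrat q (hSfin.mem_toFinset.1 hq))
  have hFint : ∀ n, 1 ≤ n → ∀ C, F n (C ∩ Rn X n) = F n C := by
    intro n hn C
    simp only [hF_def]
    refine Finset.sum_congr rfl fun q hq => ?_
    by_cases hC : c n q ∈ C
    · rw [if_pos ⟨hC, hmemRn n hn q hq⟩, if_pos hC]
    · rw [if_neg (fun hmem => hC hmem.1), if_neg hC]
  have hTnn : ∀ n, 1 ≤ n → ∀ q ∈ s, 0 ≤ pr q * T n q := fun n hn q hq =>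
    mul_nonneg (hpr0 q) (typeProb_nonneg (fun x => (hmemRn n hn q hq).1.1 x))
  -- events about qhat
  obtain ⟨U, hUo, hqU, hUQ⟩ := hint
  have hev_qhatQ : ∀ᶠ n : ℕ in atTop, c n qhat ∈ Q := by
    filter_upwards [hn1ev, (hc_tendsto qhat hqhat_rat).eventually_mem (hUo.mem_nhds hqU)]
      with n hn1 hnU
    exact hUQ ⟨hnU, (hc1 n hn1 qhat hqhat_rat).1⟩
  have hev_qhatBall : ∀ᶠ n : ℕ in atTop, c n qhat ∈ tvBall qhat ε := by
    filter_upwards [hn1ev, (htvq qhat hqhat_rat).eventually_lt_const hε] with n hn1 hlt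
    exact ⟨(hc1 n hn1 qhat hqhat_rat).1, le_of_lt (by rwa [tv_symm] at hlt)⟩
  have hev_notQ : ∀ᶠ n : ℕ in atTop, ∀ q ∈ s, q ∉ Q → c n q ∉ Q := by
    rw [eventually_all_finset]
    intro q hq
    by_cases hqQ : q ∈ Q
    · exact Eventually.of_forall (fun n h => absurd hqQ h)
    · have hopen : IsOpen {r : ↥(pmfSet X) | ↑r ∈ Q}ᶜ := hQclosed.isOpen_compl
      obtain ⟨V, hVo, hVeq⟩ := isOpen_induced_iff.1 hopen
      have hqS' : q ∈ S := hSfin.mem_toFinset.1 hq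
      have hqrat := hSrat q hqS'
      have hqpmf : q ∈ pmfSet X := hqrat.1
      have hqV : q ∈ V := by
        have h1 : (⟨q, hqpmf⟩ : ↥(pmfSet X)) ∈ ({r : ↥(pmfSet X) | ↑r ∈ Q}ᶜ : Set _) := hqQ
        rw [← hVeq] at h1
        exact h1
      filter_upwards [hn1ev, (hc_tendsto q hqrat).eventually_mem (hVo.mem_nhds hqV)]
        with n hn1 hnV
      intro _ hcQ
      have hcpmf : c n q ∈ pmfSet X := (hc1 n hn1 q hqrat).1
      have h2 : (⟨c n q, hcpmf⟩ : ↥(pmfSet X)) ∈ Subtype.val ⁻¹' V := hnV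
      rw [hVeq] at h2
      exact h2 hcQ
  have hbase_pos : ∀ᶠ n : ℕ in atTop, ∀ x, 0 < c n qhat x :=
    eventually_all.2 fun x => (hc_coord qhat hqhat_rat x).eventually_const_lt (hqhat_pos x)
  set Lr : ℝ := ∑ x, p x * Real.log (qhat x) with hLr_def
  have hLdivLr : Ldiv qhat p = (Lr : EReal) := Ldiv_eq_coe (fun x _ => ne_of_gt (hqhat_pos x))
  have hh : Tendsto (fun n => ∑ x, ν n x * Real.log (c n qhat x)) atTop (nhds Lr) := by
    rw [hLr_def]
    exact tendsto_finset_sum _ fun x _ => (hν_coord x).mul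
      (((Real.continuousAt_log (ne_of_gt (hqhat_pos x))).tendsto).comp (hc_coord qhat hqhat_rat x))
  have hTqhat_pos : ∀ᶠ n : ℕ in atTop, 0 < T n qhat := by
    filter_upwards [hbase_pos] with n h1
    simp only [hT_def]
    exact Finset.prod_pos fun x _ => Real.rpow_pos_of_pos (h1 x) _
  set G : Finset (X → ℝ) := s.filter (fun q => q ∈ Q ∧ q ≠ qhat) with hG_def
  -- per-q decay
  have hclaim : ∀ q ∈ G, Tendsto (fun n => T n q / T n qhat) atTop (nhds 0) := by
    intro q hqG
    rw [hG_def, Finset.mem_filter] at hqG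
    obtain ⟨hqs, hqQ, hqne⟩ := hqG
    have hqS' : q ∈ S := hSfin.mem_toFinset.1 hqs
    have hqrat := hSrat q hqS'
    have hqpmf : q ∈ pmfSet X := hqrat.1
    have hlt : Ldiv q p < Ldiv qhat p :=
      lt_of_le_of_ne (hmax q ⟨hqQ, hqS'⟩) (fun he => hqne (huniq q ⟨hqQ, hqS'⟩ he))
    rw [hLdivLr] at hlt
    obtain ⟨α, hα1, hα2⟩ := EReal.lt_iff_exists_real_btwn.1 hlt
    have hαLr : α < Lr := by exact_mod_cast hα2
    set β : ℝ := (α + Lr) / 2 with hβ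
    have hαβ : α < β := by rw [hβ]; linarith
    have hβLr : β < Lr := by rw [hβ]; linarith
    have hden : ∀ᶠ n : ℕ in atTop, Real.exp ((n:ℝ) * β) ≤ T n qhat ∧ 0 < T n qhat := by
      filter_upwards [hbase_pos, hh.eventually_const_lt hβLr] with n h1 h2
      have he : T n qhat = Real.exp ((n:ℝ) * ∑ x, ν n x * Real.log (c n qhat x)) := by
        simp only [hT_def]; exact typeProb_eq_exp h1
      refine ⟨?_, by rw [he]; exact Real.exp_pos _⟩
      rw [he]
      exact Real.exp_le_exp.2 (mul_le_mul_of_nonneg_left (le_of_lt h2) (Nat.cast_nonneg n))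
    have hnum : ∀ᶠ n : ℕ in atTop, T n q ≤ Real.exp ((n:ℝ) * α) := by
      by_cases hfull : ∀ x, q x ≠ 0
      · have hqpos : ∀ x, 0 < q x := fun x => lt_of_le_of_ne (hqpmf.1 x) (Ne.symm (hfull x))
        have hLq : Ldiv q p = ((∑ x, p x * Real.log (q x) : ℝ) : EReal) :=
          Ldiv_eq_coe (fun x _ => hfull x)
        rw [hLq] at hα1
        have hLqα : (∑ x, p x * Real.log (q x)) < α := by exact_mod_cast hα1
        have hbase : ∀ᶠ n : ℕ in atTop, ∀ x, 0 < c n q x :=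
          eventually_all.2 fun x => (hc_coord q hqrat x).eventually_const_lt (hqpos x)
        have hh' : Tendsto (fun n => ∑ x, ν n x * Real.log (c n q x)) atTop
            (nhds (∑ x, p x * Real.log (q x))) :=
          tendsto_finset_sum _ fun x _ => (hν_coord x).mul
            (((Real.continuousAt_log (ne_of_gt (hqpos x))).tendsto).comp (hc_coord q hqrat x))
        filter_upwards [hbase, hh'.eventually_lt_const hLqα] with n h1 h2
        have he : T n q = Real.exp ((n:ℝ) * ∑ x, ν n x * Real.log (c n q x)) := by
          simp only [hT_def]; exact typeProb_eq_exp h1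
        rw [he]
        exact Real.exp_le_exp.2 (mul_le_mul_of_nonneg_left (le_of_lt h2) (Nat.cast_nonneg n))
      · push_neg at hfull
        obtain ⟨x0, hx0⟩ := hfull
        set d : ℝ := min (1/2 : ℝ) (Real.exp (2 * α / p x0)) with hd_def
        have hd_pos : 0 < d := lt_min (by norm_num) (Real.exp_pos _)
        have hd_half : d ≤ 1/2 := min_le_left _ _
        have hlogd_neg : Real.log d < 0 :=
          Real.log_neg hd_pos (lt_of_le_of_lt hd_half (by norm_num))
        have hlogd : (p x0 / 2) * Real.log d ≤ α := by
          have h1 : Real.log d ≤ 2 * α / p x0 := by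
            calc Real.log d ≤ Real.log (Real.exp (2 * α / p x0)) :=
                  Real.log_le_log hd_pos (min_le_right _ _)
              _ = 2 * α / p x0 := Real.log_exp _
          have hp2 : 0 < p x0 / 2 := by have := hpfull x0; linarith
          calc (p x0 / 2) * Real.log d ≤ (p x0 / 2) * (2 * α / p x0) :=
                mul_le_mul_of_nonneg_left h1 (le_of_lt hp2)
            _ = α := by
                have hpne : p x0 ≠ 0 := ne_of_gt (hpfull x0)
                field_simp
        have hev_small : ∀ᶠ n : ℕ in atTop, c n q x0 < d := by
          filter_upwards [(htvq q hqrat).eventually_lt_const (by linarith : (0:ℝ) < d/2)]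
            with n h1
          have h2 := abs_le_two_tv q (c n q) x0
          rw [hx0] at h2
          have h3 : |(-(c n q x0))| ≤ 2 * tv q (c n q) := by
            simpa using h2
          rw [abs_neg] at h3
          calc c n q x0 ≤ |c n q x0| := le_abs_self _
            _ ≤ 2 * tv q (c n q) := h3
            _ < 2 * (d/2) := by linarith
            _ = d := by ring
        have hev_ν : ∀ᶠ n : ℕ in atTop, p x0 / 2 ≤ ν n x0 := by
          filter_upwards [(hν_coord x0).eventually_const_lt
            (by have := hpfull x0; linarith : p x0 / 2 < p x0)] with n h1
          exact le_of_lt h1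
        filter_upwards [hn1ev, hev_small, hev_ν] with n hn1 hsmall hνn
        have hcRn : c n q ∈ Rn X n := hc1 n hn1 q hqrat
        have hcpmf : c n q ∈ pmfSet X := hcRn.1
        have hνpmf : ν n ∈ pmfSet X := (hν n hn1).1
        have hνx0 : 0 < ν n x0 := lt_of_lt_of_le (by have := hpfull x0; linarith) hνn
        by_cases hc0 : c n q x0 = 0
        · have hz : T n q = 0 := by
            simp only [hT_def]
            unfold typeProb
            refine Finset.prod_eq_zero (Finset.mem_univ x0) ?_
            rw [hc0]
            exact Real.zero_rpow (by positivity)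
          rw [hz]
          exact le_of_lt (Real.exp_pos _)
        · have hcpos : 0 < c n q x0 := lt_of_le_of_ne (hcpmf.1 x0) (Ne.symm hc0)
          have h4 : T n q ≤ c n q x0 ^ ((n:ℝ) * ν n x0) := by
            simp only [hT_def]
            exact typeProb_le_single hcpmf (fun x => hνpmf.1 x) x0
          have h5 : c n q x0 ^ ((n:ℝ) * ν n x0)
              = Real.exp ((n:ℝ) * (ν n x0 * Real.log (c n q x0))) := by
            rw [Real.rpow_def_of_pos hcpos]
            ring_nf
          have h6 : (n:ℝ) * (ν n x0 * Real.log (c n q x0)) ≤ (n:ℝ) * α := by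
            apply mul_le_mul_of_nonneg_left _ (Nat.cast_nonneg n)
            have hlog1 : Real.log (c n q x0) ≤ Real.log d :=
              Real.log_le_log hcpos (le_of_lt hsmall)
            calc ν n x0 * Real.log (c n q x0) ≤ ν n x0 * Real.log d :=
                  mul_le_mul_of_nonneg_left hlog1 (le_of_lt hνx0)
              _ ≤ (p x0 / 2) * Real.log d := by
                  apply mul_le_mul_of_nonpos_right hνn (le_of_lt hlogd_neg)
              _ ≤ α := hlogd
          calc T n q ≤ c n q x0 ^ ((n:ℝ) * ν n x0) := h4
            _ = Real.exp ((n:ℝ) * (ν n x0 * Real.log (c n q x0))) := h5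
            _ ≤ Real.exp ((n:ℝ) * α) := Real.exp_le_exp.2 h6
    refine squeeze_zero' ?_ ?_ (exp_ratio_tendsto hαβ)
    · filter_upwards [hden, hn1ev] with n h1 hn1
      exact div_nonneg (typeProb_nonneg (fun x => (hc1 n hn1 q hqrat).1.1 x)) (le_of_lt h1.2)
    · filter_upwards [hden, hnum] with n h1 h2
      exact div_le_div₀ (le_of_lt (Real.exp_pos _)) h2 (Real.exp_pos _) h1.1
  -- final events and assembly
  have hqhat_s : qhat ∈ s := hSfin.mem_toFinset.2 hqhatS
  set D : ℕ → ℝ := fun n =>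
    ∑ q ∈ s, if c n q ∈ Q ∧ c n q ∉ tvBall qhat ε then pr q * T n q else 0 with hD_def
  have hsplit : ∀ n, 1 ≤ n → F n Q = F n (tvBall qhat ε ∩ Q) + D n := by
    intro n hn
    simp only [hF_def, hD_def, ← Finset.sum_add_distrib]
    refine Finset.sum_congr rfl fun q hq => ?_
    by_cases h1 : c n q ∈ Q
    · by_cases h2 : c n q ∈ tvBall qhat ε
      · rw [if_pos h1, if_pos (Set.mem_inter h2 h1), if_neg (fun hc => hc.2 h2)]; ring
      · rw [if_pos h1, if_neg (fun hc : c n q ∈ tvBall qhat ε ∩ Q => h2 hc.1), if_pos ⟨h1, h2⟩]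
        ring
    · rw [if_neg h1, if_neg (fun hc : c n q ∈ tvBall qhat ε ∩ Q => h1 hc.2),
        if_neg (fun hc => h1 hc.1)]
      ring
  have hFQ_lb : ∀ᶠ n : ℕ in atTop, pr qhat * T n qhat ≤ F n Q := by
    filter_upwards [hn1ev, hev_qhatQ] with n hn1 hQm
    simp only [hF_def]
    calc pr qhat * T n qhat = if c n qhat ∈ Q then pr qhat * T n qhat else 0 := (if_pos hQm).symm
      _ ≤ ∑ q ∈ s, if c n q ∈ Q then pr q * T n q else 0 := by
          refine Finset.single_le_sum (f := fun q => if c n q ∈ Q then pr q * T n q else 0)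
            (fun q hq => ?_) hqhat_s
          show 0 ≤ if c n q ∈ Q then pr q * T n q else 0
          split_ifs
          · exact hTnn n hn1 q hq
          · exact le_rfl
  have hFRn_lb : ∀ᶠ n : ℕ in atTop, F n Q ≤ F n (Rn X n) ∧ pr qhat * T n qhat ≤ F n (Rn X n) := by
    filter_upwards [hn1ev, hFQ_lb] with n hn1 hlb
    have hle : F n Q ≤ F n (Rn X n) := by
      simp only [hF_def]
      refine Finset.sum_le_sum fun q hq => ?_
      rw [if_pos (hmemRn n hn1 q hq)]
      split_ifs
      · exact le_rfl
      · exact hTnn n hn1 q hq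
    exact ⟨hle, le_trans hlb hle⟩
  have hD_nonneg : ∀ᶠ n : ℕ in atTop, 0 ≤ D n := by
    filter_upwards [hn1ev] with n hn1
    simp only [hD_def]
    refine Finset.sum_nonneg fun q hq => ?_
    split_ifs
    · exact hTnn n hn1 q hq
    · exact le_rfl
  have hD_le : ∀ᶠ n : ℕ in atTop, D n ≤ ∑ q ∈ G, pr q * T n q := by
    filter_upwards [hn1ev, hev_notQ, hev_qhatBall] with n hn1 hnotQ hball
    simp only [hD_def]
    rw [← Finset.sum_filter]
    refine Finset.sum_le_sum_of_subset_of_nonneg ?_ (fun q hq _ => ?_)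
    · intro q hq
      rw [Finset.mem_filter] at hq
      obtain ⟨hqs, hc1q, hc2q⟩ := hq
      rw [hG_def, Finset.mem_filter]
      refine ⟨hqs, ?_, ?_⟩
      · by_contra hqQ
        exact hnotQ q hqs hqQ hc1q
      · rintro rfl
        exact hc2q hball
    · rw [hG_def, Finset.mem_filter] at hq
      exact hTnn n hn1 q hq.1
  have hRtend : Tendsto (fun n => ∑ q ∈ G, (pr q * T n q) / (pr qhat * T n qhat)) atTop
      (nhds 0) := by
    have h0 : ∀ q ∈ G, Tendsto (fun n => (pr q * T n q) / (pr qhat * T n qhat)) atTop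
        (nhds 0) := by
      intro q hqG
      have h1 : ∀ n, (pr q * T n q) / (pr qhat * T n qhat)
          = (pr q / pr qhat) * (T n q / T n qhat) := fun n => mul_div_mul_comm _ _ _ _
      simp only [h1]
      simpa using (hclaim q hqG).const_mul (pr q / pr qhat)
    have := tendsto_finset_sum G (fun q hq => h0 q hq)
    simpa using this
  have hDB : Tendsto (fun n => D n / F n Q) atTop (nhds 0) := by
    refine squeeze_zero' ?_ ?_ hRtend
    · filter_upwards [hD_nonneg, hFQ_lb, hTqhat_pos] with n h1 h2 h3
      exact div_nonneg h1 (le_trans (le_of_lt (mul_pos hqhat_pr h3)) h2)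
    · filter_upwards [hn1ev, hD_nonneg, hD_le, hFQ_lb, hTqhat_pos] with n hn1 h1 h2 h3 h4
      have hpos : 0 < pr qhat * T n qhat := mul_pos hqhat_pr h4
      calc D n / F n Q ≤ (∑ q ∈ G, pr q * T n q) / (pr qhat * T n qhat) := by
            refine div_le_div₀ ?_ h2 hpos h3
            refine Finset.sum_nonneg fun q hq => ?_
            rw [hG_def, Finset.mem_filter] at hq
            exact hTnn n hn1 q hq.1
        _ = ∑ q ∈ G, (pr q * T n q) / (pr qhat * T n qhat) := Finset.sum_div _ _ _
  have hmain : Tendsto (fun n => F n (tvBall qhat ε ∩ Q) / F n Q) atTop (nhds 1) := by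
    have h1 : Tendsto (fun n => 1 - D n / F n Q) atTop (nhds 1) := by
      simpa using tendsto_const_nhds.sub hDB
    refine Tendsto.congr' ?_ h1
    filter_upwards [hn1ev, hFQ_lb, hTqhat_pos] with n hn1 hlb hpos
    have hFQpos : 0 < F n Q := lt_of_lt_of_le (mul_pos hqhat_pr hpos) hlb
    have hsp := hsplit n hn1
    have : F n (tvBall qhat ε ∩ Q) = F n Q - D n := by linarith
    rw [this, sub_div, div_self (ne_of_gt hFQpos)]
  refine Tendsto.congr' ?_ hmain
  filter_upwards [hn1ev, hFQ_lb, hTqhat_pos, hFRn_lb] with n hn1 hlb hpos hRn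
  have hFQpos : 0 < F n Q := lt_of_lt_of_le (mul_pos hqhat_pr hpos) hlb
  have hFRnpos : 0 < F n (Rn X n) := lt_of_lt_of_le (mul_pos hqhat_pr hpos) hRn.2
  rw [hpost n (tvBall qhat ε ∩ Q), hpost n Q, hFint n hn1 (tvBall qhat ε ∩ Q), hFint n hn1 Q]
  field_simp
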